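/- Let G be a finite group, H a subgroup of G, and p, q primes. If q divides |H/O_{p',p}(H)| then q divides |G/O_{p',p}(G)|. (The Hawkes graph function is S-closed: H ≤ G implies Γ_H(H) ⊆ Γ_H(G).) -/

import Mathlib

/-- The join of a set of normal subgroups is normal. -/
theorem sSup_normal {G : Type*} [Group G] (S : Set (Subgroup G)) (hS : ∀ N ∈ S, N.Normal) :
    (sSup S).Normal := by
  constructor
  intro n hn g
  rw [sSup_eq_iSup'] at hn ⊢
  refine Subgroup.iSup_induction (C := fun x => g * x * g⁻¹ ∈ ⨆ N : S, (N : Subgroup G))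
    _ hn ?_ ?_ ?_
  · intro N x hx
    exact Subgroup.mem_iSup_of_mem N ((hS N N.2).conj_mem x hx g)
  · simpa using Subgroup.one_mem _
  · intro x y hx hy
    have h : g * (x * y) * g⁻¹ = (g * x * g⁻¹) * (g * y * g⁻¹) := by group
    rw [h]; exact Subgroup.mul_mem _ hx hy

/-- The `p'`-core `O_{p'}(G)`: the largest normal subgroup of `G` of order coprime to `p`,
realized as the join of all normal subgroups of order coprime to `p`. -/
def pPrimeCore (p : ℕ) (G : Type*) [Group G] : Subgroup G :=
  sSup {N : Subgroup G | N.Normal ∧ Nat.Coprime (Nat.card N) p}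

instance pPrimeCore_normal (p : ℕ) (G : Type*) [Group G] : (pPrimeCore p G).Normal :=
  sSup_normal _ fun _ hN => hN.1

/-- The `p`-core `O_p(G)`: the largest normal `p`-subgroup of `G`,
realized as the join of all normal `p`-subgroups. -/
def pCore (p : ℕ) (G : Type*) [Group G] : Subgroup G :=
  sSup {N : Subgroup G | N.Normal ∧ IsPGroup p N}

instance pCore_normal (p : ℕ) (G : Type*) [Group G] : (pCore p G).Normal :=
  sSup_normal _ fun _ hN => hN.1

/-- `O_{p',p}(G)`: the preimage in `G` of `O_p(G / O_{p'}(G))`. -/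
def OpPrimeP (p : ℕ) (G : Type*) [Group G] : Subgroup G :=
  (pCore p (G ⧸ pPrimeCore p G)).comap (QuotientGroup.mk' (pPrimeCore p G))

/-- A Schmidt group: a non-nilpotent group all of whose proper subgroups are nilpotent. -/
def IsSchmidt (G : Type*) [Group G] : Prop :=
  ¬ Group.IsNilpotent G ∧ ∀ H : Subgroup G, H ≠ ⊤ → Group.IsNilpotent H

/-- A Schmidt `(p,q)`-group: a Schmidt group whose order is divisible by exactly the
primes `p` and `q` and whose Sylow `p`-subgroup is normal. -/
def IsSchmidtPQ (p q : ℕ) (G : Type*) [Group G] : Prop :=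
  IsSchmidt G ∧ (Nat.card G).primeFactors = {p, q} ∧ ∃ P : Sylow p G, (P : Subgroup G).Normal

/-!
`O_{p'}(G) ∩ H` is a normal `p'`-subgroup of `H`, so it lies in `O_{p'}(H)`; hence every element of
`O_{p',p}(G) ∩ H` has a `p`-power lying in `O_{p'}(H)`, and the image of `O_{p',p}(G) ∩ H` in
`H / O_{p'}(H)` is a normal `p`-subgroup. Thus `O_{p',p}(G) ∩ H ≤ O_{p',p}(H)`, and
`|H : O_{p',p}(H)|` divides `|H : O_{p',p}(G) ∩ H| = |H O_{p',p}(G) : O_{p',p}(G)|`, which divides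
`|G : O_{p',p}(G)|`.
-/

namespace Subgroup

variable {G : Type*} [Group G]

theorem card_subgroupOf_dvd_card (N H : Subgroup G) :
    Nat.card (N.subgroupOf H) ∣ Nat.card N := by
  rw [← card_map_of_injective H.subtype_injective, subgroupOf_map_subtype]
  exact card_dvd_of_le inf_le_left

theorem card_sup_dvd_mul_card (M N : Subgroup G) [N.Normal] :
    Nat.card ↥(M ⊔ N) ∣ Nat.card M * Nat.card N := by
  rw [← card_mul_index (N.subgroupOf (M ⊔ N)), mul_comm]
  have hindex : N.relIndex (M ⊔ N) ∣ Nat.card M := relIndex_sup_right M N ▸ relIndex_dvd_card N M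
  exact mul_dvd_mul hindex (card_subgroupOf_dvd_card N _)

theorem sSup_setOf_normal_and [Finite G] {P : Subgroup G → Prop} (hbot : P ⊥)
    (hsup : ∀ M N : Subgroup G, M.Normal → N.Normal → P M → P N → P (M ⊔ N)) :
    P (sSup {N : Subgroup G | N.Normal ∧ P N}) := by
  have hclosed : SupClosed {N : Subgroup G | N.Normal ∧ P N} := by
    rintro M ⟨hM, hPM⟩ N ⟨hN, hPN⟩
    exact ⟨@sup_normal _ _ M N hM hN, hsup M N hM hN hPM hPN⟩
  exact (hclosed.sSup_mem (Set.toFinite _) ⟨normal_bot, hbot⟩ subset_rfl).2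

theorem index_dvd_index_of_subgroupOf_le {K H : Subgroup G} [K.Normal] {L : Subgroup H}
    (h : K.subgroupOf H ≤ L) : L.index ∣ K.index :=
  (index_dvd_of_le h).trans (relIndex_dvd_index_of_normal K H)

end Subgroup

open Subgroup

section Cores

variable {G : Type*} [Group G] (p : ℕ)

theorem coprime_card_pPrimeCore [Finite G] : (Nat.card (pPrimeCore p G)).Coprime p :=
  sSup_setOf_normal_and (P := fun N => (Nat.card N).Coprime p) (by simp) fun M N _ _ hM hN =>
    Nat.Coprime.coprime_dvd_left (card_sup_dvd_mul_card M N) (hM.mul_left hN)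

theorem isPGroup_pCore [Finite G] : IsPGroup p (pCore p G) :=
  sSup_setOf_normal_and (P := fun N => IsPGroup p N) IsPGroup.of_bot fun _ _ _ _ hM hN =>
    hM.to_sup_of_normal_right hN

theorem le_pPrimeCore {N : Subgroup G} [hN : N.Normal] (h : (Nat.card N).Coprime p) :
    N ≤ pPrimeCore p G :=
  le_sSup ⟨hN, h⟩

theorem le_pCore {N : Subgroup G} [hN : N.Normal] (h : IsPGroup p N) : N ≤ pCore p G :=
  le_sSup ⟨hN, h⟩

instance opPrimeP_normal : (OpPrimeP p G).Normal :=
  normal_comap _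

theorem pPrimeCore_subgroupOf_le [Finite G] (H : Subgroup G) :
    (pPrimeCore p G).subgroupOf H ≤ pPrimeCore p H :=
  le_pPrimeCore p <| Nat.Coprime.coprime_dvd_left (card_subgroupOf_dvd_card _ H)
    (coprime_card_pPrimeCore p)

theorem exists_pow_mem_pPrimeCore_of_mem_opPrimeP [Finite G] {g : G} (hg : g ∈ OpPrimeP p G) :
    ∃ k : ℕ, g ^ p ^ k ∈ pPrimeCore p G := by
  obtain ⟨k, hk⟩ := isPGroup_pCore p (G := G ⧸ pPrimeCore p G) ⟨_, hg⟩
  exact ⟨k, (QuotientGroup.eq_one_iff _).mp (congrArg Subtype.val hk)⟩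

theorem opPrimeP_subgroupOf_le [Finite G] (H : Subgroup G) :
    (OpPrimeP p G).subgroupOf H ≤ OpPrimeP p H := by
  let X := ((OpPrimeP p G).subgroupOf H).map (QuotientGroup.mk' (pPrimeCore p H))
  have : X.Normal := normal_subgroupOf.map _ (QuotientGroup.mk'_surjective _)
  have hX : IsPGroup p X := by
    rintro ⟨_, m, hm, rfl⟩
    obtain ⟨k, hk⟩ := exists_pow_mem_pPrimeCore_of_mem_opPrimeP p hm
    refine ⟨k, Subtype.ext ?_⟩
    exact (QuotientGroup.eq_one_iff _).mpr (pPrimeCore_subgroupOf_le p H hk)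
  exact fun h hh => le_pCore p hX (mem_map_of_mem _ hh)

end Cores

theorem hawkes_S_closed_general {G : Type*} [Group G] [Finite G] (H : Subgroup G) {p q : ℕ}
    (h : q ∣ Nat.card (H ⧸ OpPrimeP p H)) :
    q ∣ Nat.card (G ⧸ OpPrimeP p G) :=
  h.trans (index_dvd_index_of_subgroupOf_le (opPrimeP_subgroupOf_le p H))

/-- The Hawkes graph function is `S`-closed: for a subgroup `H ≤ G`, if `q` divides
`|H / O_{p',p}(H)|` then `q` divides `|G / O_{p',p}(G)|`. -/
theorem hawkes_S_closed {G : Type*} [Group G] [Finite G] (H : Subgroup G) {p q : ℕ}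
    (hp : p.Prime) (hq : q.Prime)
    (h : q ∣ Nat.card (H ⧸ OpPrimeP p H)) :
    q ∣ Nat.card (G ⧸ OpPrimeP p G) :=
  hawkes_S_closed_general H h
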